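/- arXiv:2501.01794 — 8 statements merged into one kernel-verified Lean document; each statement's English description precedes it below -/
import Mathlib

section
/- Let e, k, x be positive integers, and let y_1, ..., y_k be proper divisors of x (i.e. each y_i divides x and y_i < x; repetitions among the y_i are allowed). Then x^e + Σ_{∅ ≠ I ⊆ {1,...,k}} (-1)^{|I|} · gcd{y_i : i ∈ I}^e > 0. -/
open Finset

private lemma count_mult_aux (x d : ℕ) (hx : 0 < x) (hd : d ∣ x) (hd0 : 0 < d) :
    ((Finset.range x).filter (fun w => x ∣ d * w)).card = d := by
  obtain ⟨m, hm⟩ := hd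
  have hm0 : 0 < m := by
    rcases Nat.eq_zero_or_pos m with h | h
    · subst h; omega
    · exact h
  have hset : (Finset.range x).filter (fun w => x ∣ d * w)
      = (Finset.range d).image (· * m) := by
    ext w
    simp only [mem_filter, mem_range, mem_image]
    constructor
    · rintro ⟨hw, hdv⟩
      rw [hm, Nat.mul_dvd_mul_iff_left hd0] at hdv
      obtain ⟨a, rfl⟩ := hdv
      rw [hm] at hw
      refine ⟨a, ?_, by ring⟩
      by_contra h
      push_neg at h
      nlinarith
    · rintro ⟨a, ha, rfl⟩
      exact ⟨by rw [hm]; exact Nat.mul_lt_mul_of_lt_of_le ha le_rfl hm0,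
        ⟨a, by rw [hm]; ring⟩⟩
  rw [hset, Finset.card_image_of_injective _ (fun a b h => Nat.eq_of_mul_eq_mul_right hm0 h),
    Finset.card_range]

theorem alternating_gcd_sum_pos (e k x : ℕ) (he : 0 < e) (hk : 0 < k) (hx : 0 < x)
    (y : Fin k → ℕ) (hdvd : ∀ i, y i ∣ x) (hlt : ∀ i, y i < x) :
    0 < (x : ℤ) ^ e +
      ∑ I ∈ Finset.univ.powerset.filter (fun I : Finset (Fin k) => I ≠ ∅),
        (-1 : ℤ) ^ I.card * ((I.gcd y : ℕ) : ℤ) ^ e := by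
  classical
  have hy : ∀ i, 0 < y i := fun i => Nat.pos_of_dvd_of_pos (hdvd i) hx
  have hx1 : 1 < x := by
    rcases Nat.lt_or_ge 1 x with h | h
    · exact h
    · exfalso
      have := hlt ⟨0, hk⟩
      have := hy ⟨0, hk⟩
      omega
  set S := Fintype.piFinset (fun _ : Fin e => Finset.range x) with hS
  set f : Fin k → ℕ → ℤ := fun i w => if x ∣ y i * w then 1 else 0 with hf
  set c : Finset (Fin k) → ℕ :=
    fun I => ((Finset.range x).filter (fun w => ∀ i ∈ I, x ∣ y i * w)).card with hc
  -- counting lemma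
  have hcount : ∀ I : Finset (Fin k),
      (∑ z ∈ S, ∏ i ∈ I, ∏ j : Fin e, f i (z j)) = (c I : ℤ) ^ e := by
    intro I
    calc (∑ z ∈ S, ∏ i ∈ I, ∏ j : Fin e, f i (z j))
        = ∑ z ∈ S, ∏ j : Fin e, ∏ i ∈ I, f i (z j) :=
          Finset.sum_congr rfl fun z _ => Finset.prod_comm
      _ = ∏ _j : Fin e, ∑ w ∈ Finset.range x, ∏ i ∈ I, f i w :=
          (Finset.prod_univ_sum (fun _ : Fin e => Finset.range x)
            (fun _ w => ∏ i ∈ I, f i w)).symm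
      _ = (c I : ℤ) ^ e := by
          have hone : ∑ w ∈ Finset.range x, ∏ i ∈ I, f i w = (c I : ℤ) := by
            have hpoint : ∀ w : ℕ, (∏ i ∈ I, f i w)
                = if ∀ i ∈ I, x ∣ y i * w then (1:ℤ) else 0 := by
              intro w
              by_cases h : ∀ i ∈ I, x ∣ y i * w
              · rw [if_pos h]
                exact Finset.prod_eq_one fun i hi => by simp [hf, h i hi]
              · rw [if_neg h]
                push_neg at h
                obtain ⟨i, hi, hno⟩ := h
                exact Finset.prod_eq_zero hi (by simp [hf, hno])
            rw [Finset.sum_congr rfl fun w _ => hpoint w, Finset.sum_boole, hc]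
          rw [hone, Finset.prod_const, Finset.card_univ, Fintype.card_fin]
  -- c ∅ = x
  have hcempty : c (∅ : Finset (Fin k)) = x := by simp [hc]
  -- c I = gcd for nonempty I
  have hcgcd : ∀ I : Finset (Fin k), I ≠ ∅ → c I = I.gcd y := by
    intro I hI
    obtain ⟨i0, hi0⟩ := Finset.nonempty_iff_ne_empty.mpr hI
    have hd0 : 0 < I.gcd y := by
      rcases Nat.eq_zero_or_pos (I.gcd y) with h | h
      · rw [Finset.gcd_eq_zero_iff] at h
        exact absurd (h i0 hi0) (hy i0).ne'
      · exact h
    have hdx : I.gcd y ∣ x := (Finset.gcd_dvd hi0).trans (hdvd i0)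
    have hset : (Finset.range x).filter (fun w => ∀ i ∈ I, x ∣ y i * w)
        = (Finset.range x).filter (fun w => x ∣ I.gcd y * w) := by
      ext w
      simp only [mem_filter, mem_range, and_congr_right_iff]
      intro _
      constructor
      · intro h
        have h2 : x ∣ I.gcd (fun i => y i * w) := Finset.dvd_gcd h
        rwa [Finset.gcd_mul_right, normalize_eq] at h2
      · intro h i hi
        exact h.trans (mul_dvd_mul_right (Finset.gcd_dvd hi) w)
    rw [hc]
    simp only [hset]
    exact count_mult_aux x (I.gcd y) hx hdx hd0
  -- inclusion-exclusion expansion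
  have key : ∑ z ∈ S, ∏ i : Fin k, ((1:ℤ) - ∏ j : Fin e, f i (z j))
      = ∑ I ∈ (Finset.univ : Finset (Fin k)).powerset, (-1:ℤ) ^ I.card * (c I : ℤ) ^ e := by
    have expand : ∀ z : Fin e → ℕ, ∏ i : Fin k, ((1:ℤ) - ∏ j : Fin e, f i (z j))
        = ∑ I ∈ (Finset.univ : Finset (Fin k)).powerset,
            (-1:ℤ) ^ I.card * ∏ i ∈ I, ∏ j : Fin e, f i (z j) := by
      intro z
      calc ∏ i : Fin k, ((1:ℤ) - ∏ j : Fin e, f i (z j))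
          = ∏ i : Fin k, ((-(∏ j : Fin e, f i (z j))) + 1) := by
            exact Finset.prod_congr rfl fun i _ => by ring
        _ = ∑ I ∈ (Finset.univ : Finset (Fin k)).powerset,
              (∏ i ∈ I, -(∏ j : Fin e, f i (z j))) * ∏ i ∈ Finset.univ \ I, (1:ℤ) :=
            Finset.prod_add _ _ _
        _ = ∑ I ∈ (Finset.univ : Finset (Fin k)).powerset,
              (-1:ℤ) ^ I.card * ∏ i ∈ I, ∏ j : Fin e, f i (z j) := by
            refine Finset.sum_congr rfl fun I _ => ?_
            rw [Finset.prod_const_one, mul_one]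
            calc (∏ i ∈ I, -(∏ j : Fin e, f i (z j)))
                = ∏ i ∈ I, ((-1:ℤ) * ∏ j : Fin e, f i (z j)) :=
                  Finset.prod_congr rfl fun i _ => (neg_one_mul _).symm
              _ = (∏ _i ∈ I, (-1:ℤ)) * ∏ i ∈ I, ∏ j : Fin e, f i (z j) :=
                  Finset.prod_mul_distrib
              _ = (-1:ℤ) ^ I.card * ∏ i ∈ I, ∏ j : Fin e, f i (z j) := by
                  rw [Finset.prod_const]
    calc ∑ z ∈ S, ∏ i : Fin k, ((1:ℤ) - ∏ j : Fin e, f i (z j))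
        = ∑ z ∈ S, ∑ I ∈ (Finset.univ : Finset (Fin k)).powerset,
            (-1:ℤ) ^ I.card * ∏ i ∈ I, ∏ j : Fin e, f i (z j) :=
          Finset.sum_congr rfl fun z _ => expand z
      _ = ∑ I ∈ (Finset.univ : Finset (Fin k)).powerset,
            ∑ z ∈ S, (-1:ℤ) ^ I.card * ∏ i ∈ I, ∏ j : Fin e, f i (z j) := Finset.sum_comm
      _ = ∑ I ∈ (Finset.univ : Finset (Fin k)).powerset, (-1:ℤ) ^ I.card * (c I : ℤ) ^ e := by
          refine Finset.sum_congr rfl fun I _ => ?_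
          rw [← Finset.mul_sum, hcount I]
  -- positivity of the LHS
  have hfact01 : ∀ (i : Fin k) (z : Fin e → ℕ),
      (∏ j : Fin e, f i (z j)) = 0 ∨ (∏ j : Fin e, f i (z j)) = 1 := by
    intro i z
    rw [hf]
    simp only
    rw [Finset.prod_boole]
    split_ifs <;> simp
  have hterm_nonneg : ∀ z ∈ S, (0:ℤ) ≤ ∏ i : Fin k, ((1:ℤ) - ∏ j : Fin e, f i (z j)) := by
    intro z _
    refine Finset.prod_nonneg fun i _ => ?_
    rcases hfact01 i z with h | h <;> rw [h] <;> norm_num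
  have hwit : (fun _ : Fin e => 1) ∈ S :=
    Fintype.mem_piFinset.mpr fun _ => Finset.mem_range.mpr hx1
  have hwitval : ∏ i : Fin k, ((1:ℤ) - ∏ j : Fin e, f i ((fun _ : Fin e => 1) j)) = 1 := by
    refine Finset.prod_eq_one fun i _ => ?_
    have hnd : ¬ x ∣ y i := fun h =>
      absurd (Nat.le_of_dvd (hy i) h) (not_le.mpr (hlt i))
    have : f i 1 = 0 := by simp [hf, hnd]
    simp only [this]
    rw [Finset.prod_const, zero_pow (by simpa using he.ne')]
    ring
  have hpos : 0 < ∑ z ∈ S, ∏ i : Fin k, ((1:ℤ) - ∏ j : Fin e, f i (z j)) := by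
    have hle := Finset.single_le_sum hterm_nonneg hwit
    rw [hwitval] at hle
    linarith
  -- split the powerset sum
  have hsplit : ∑ I ∈ (Finset.univ : Finset (Fin k)).powerset, (-1:ℤ) ^ I.card * (c I : ℤ) ^ e
      = (x:ℤ) ^ e + ∑ I ∈ Finset.univ.powerset.filter (fun I : Finset (Fin k) => I ≠ ∅),
          (-1 : ℤ) ^ I.card * ((I.gcd y : ℕ) : ℤ) ^ e := by
    rw [← Finset.sum_filter_add_sum_filter_not (Finset.univ : Finset (Fin k)).powerset
      (fun I => I ≠ ∅)]
    have h1 : (Finset.univ : Finset (Fin k)).powerset.filter (fun I => ¬ I ≠ ∅)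
        = {∅} := by
      ext I
      simp
    rw [h1, Finset.sum_singleton, hcempty]
    have h2 : ∑ I ∈ Finset.univ.powerset.filter (fun I : Finset (Fin k) => I ≠ ∅),
          (-1:ℤ) ^ I.card * (c I : ℤ) ^ e
        = ∑ I ∈ Finset.univ.powerset.filter (fun I : Finset (Fin k) => I ≠ ∅),
          (-1 : ℤ) ^ I.card * ((I.gcd y : ℕ) : ℤ) ^ e := by
      refine Finset.sum_congr rfl fun I hI => ?_
      rw [hcgcd I (Finset.mem_filter.mp hI).2]
    rw [h2]
    simp [add_comm]
  rw [← hsplit, ← key]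
  exact hpos
end

section
/- Let S = {x_1, ..., x_n} be a gcd-closed set of distinct positive integers and e a positive integer. Then the n×n matrix (S^e) with ij-entry gcd(x_i, x_j)^e factors as E·Δ·Eᵀ, where E is the n×n 0-1 matrix with e_{ij} = 1 if x_j divides x_i and 0 otherwise, and Δ = diag(α_{e,S}(x_1), ..., α_{e,S}(x_n)) with α_{e,S}(x) = Σ_{d | x, d ∤ y for all y ∈ S with y < x} (ξ_e * μ)(d). -/
open Finset

/-- `(ξ_e * μ)(d)`: Dirichlet convolution of `n ↦ n^e` with the Möbius function. -/
def xiMu (e d : ℕ) : ℤ :=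
  ∑ a ∈ d.divisors, (a : ℤ) ^ e * ArithmeticFunction.moebius (d / a)

/-- `α_{e,S}(x) = Σ_{d ∣ x, d ∤ y for all y ∈ S with y < x} (ξ_e * μ)(d)`. -/
def alphaES (e : ℕ) (S : Finset ℕ) (x : ℕ) : ℤ :=
  ∑ d ∈ x.divisors.filter (fun d => ∀ y ∈ S, y < x → ¬ d ∣ y), xiMu e d

/-- The set of greatest-type divisors of `x` in `S`. -/
def GS (S : Finset ℕ) (x : ℕ) : Finset ℕ :=
  S.filter (fun y => y ∣ x ∧ y < x ∧ ∀ z ∈ S, y ∣ z → z ∣ x → z = y ∨ z = x)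

/-- An element `x` satisfies condition 𝒞 relative to `S`. -/
def condCElem (S : Finset ℕ) (x : ℕ) : Prop :=
  ∀ y ∈ GS S x, ∀ z ∈ GS S x, y ≠ z → Nat.lcm y z = x ∧ Nat.gcd y z ∈ GS S y ∩ GS S z

/-- A set satisfies condition 𝒞 if every element with at least two
greatest-type divisors satisfies condition 𝒞. -/
def condCSet (S : Finset ℕ) : Prop :=
  ∀ x ∈ S, 2 ≤ (GS S x).card → condCElem S x

/-- `A_S(a,b) = {u ∈ S : a ∣ u ∣ b, u ≠ a}`. -/
def AS (S : Finset ℕ) (a b : ℕ) : Finset ℕ :=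
  S.filter (fun u => a ∣ u ∧ u ∣ b ∧ u ≠ a)

/-- `c_{rm}` (with `xr, xm` the actual elements): sum of `μ(d)` over `d` with
`d·xr ∣ xm` and `d·xr ∤ t` for all `t ∈ S` with `t < xm`. -/
def cCoef (S : Finset ℕ) (xr xm : ℕ) : ℤ :=
  ∑ d ∈ xm.divisors.filter (fun d => d * xr ∣ xm ∧ ∀ t ∈ S, t < xm → ¬ d * xr ∣ t),
    ArithmeticFunction.moebius d

/-- `g(k,m)` (with `xk, xm` the actual elements). -/
noncomputable def gFun (e : ℕ) (S : Finset ℕ) (xk xm : ℕ) : ℚ :=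
  (1 / (alphaES e S xm : ℚ)) *
    ∑ r ∈ S.filter (fun r => r ∣ xm), (cCoef S r xm : ℚ) * (Nat.lcm xk r : ℚ) ^ e

/-- Möbius inversion: summing `ξ_e * μ` over divisors of `g` gives `g^e`. -/
lemma sum_xiMu (e : ℕ) {g : ℕ} (hg : 0 < g) :
    ∑ d ∈ g.divisors, xiMu e d = (g : ℤ) ^ e := by
  refine (ArithmeticFunction.sum_eq_iff_sum_smul_moebius_eq
    (f := xiMu e) (g := fun n => (n : ℤ) ^ e)).mpr ?_ g hg
  intro n hn
  rw [Nat.sum_divisorsAntidiagonal' (f := fun a b => (ArithmeticFunction.moebius a) • ((b : ℤ) ^ e))]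
  unfold xiMu
  refine Finset.sum_congr rfl fun a ha => ?_
  simp [mul_comm]

/-- Key combinatorial identity: if `S` is gcd-closed and `g ∈ S`, then
`∑_{s ∈ S, s ∣ g} α_{e,S}(s) = g^e`. -/
lemma sum_alpha (e : ℕ) (S : Finset ℕ) (hposS : ∀ s ∈ S, 0 < s)
    (hgcdS : ∀ a ∈ S, ∀ b ∈ S, Nat.gcd a b ∈ S) {g : ℕ} (hgS : g ∈ S) :
    ∑ s ∈ S.filter (· ∣ g), alphaES e S s = (g : ℤ) ^ e := by
  set D : ℕ → Finset ℕ :=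
    fun s => s.divisors.filter (fun d => ∀ y ∈ S, y < s → ¬ d ∣ y) with hD
  have hdisj : (↑(S.filter (· ∣ g)) : Set ℕ).PairwiseDisjoint D := by
    intro a ha b hb hab
    simp only [coe_filter, Set.mem_setOf_eq] at ha hb
    refine Finset.disjoint_left.mpr fun d hda hdb => ?_
    simp only [hD, mem_filter, Nat.mem_divisors] at hda hdb
    rcases lt_or_gt_of_ne hab with h | h
    · exact hdb.2 a ha.1 h hda.1.1
    · exact hda.2 b hb.1 h hdb.1.1
  have hunion : (S.filter (· ∣ g)).biUnion D = g.divisors := by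
    ext d
    simp only [mem_biUnion, mem_filter, Nat.mem_divisors, hD]
    constructor
    · rintro ⟨s, ⟨hsS, hsg⟩, ⟨hds, _⟩, _⟩
      exact ⟨hds.trans hsg, (hposS g hgS).ne'⟩
    · rintro ⟨hdg, hg0⟩
      have hT : (S.filter (d ∣ ·)).Nonempty := ⟨g, by simp [hgS, hdg]⟩
      set m := (S.filter (d ∣ ·)).min' hT with hm
      have hmmem := (S.filter (d ∣ ·)).min'_mem hT
      simp only [mem_filter] at hmmem
      obtain ⟨hmS, hdm⟩ := hmmem
      have hgcdmem : Nat.gcd m g ∈ S := hgcdS m hmS g hgS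
      have hdgcd : d ∣ Nat.gcd m g := Nat.dvd_gcd hdm hdg
      have hle : m ≤ Nat.gcd m g :=
        (S.filter (d ∣ ·)).min'_le _ (by simp [hgcdmem, hdgcd])
      have hge : Nat.gcd m g ≤ m := Nat.le_of_dvd (hposS m hmS) (Nat.gcd_dvd_left m g)
      have hmg : m ∣ g := by
        have : Nat.gcd m g = m := le_antisymm hge hle
        rw [← this]; exact Nat.gcd_dvd_right m g
      refine ⟨m, ⟨hmS, hmg⟩, ⟨hdm, (hposS m hmS).ne'⟩, fun y hyS hym hdy => ?_⟩
      exact absurd ((S.filter (d ∣ ·)).min'_le y (by simp [hyS, hdy])) (not_le.mpr hym)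
  calc ∑ s ∈ S.filter (· ∣ g), alphaES e S s
      = ∑ d ∈ (S.filter (· ∣ g)).biUnion D, xiMu e d := (Finset.sum_biUnion hdisj).symm
    _ = (g : ℤ) ^ e := by rw [hunion]; exact sum_xiMu e (hposS g hgS)

theorem power_gcd_matrix_factorization (n e : ℕ) (he : 0 < e) (x : Fin n → ℕ)
    (hinj : Function.Injective x) (hpos : ∀ i, 0 < x i)
    (hgcd : ∀ i j : Fin n, ∃ k, x k = Nat.gcd (x i) (x j)) :
    (Matrix.of fun i j : Fin n => ((Nat.gcd (x i) (x j) : ℤ)) ^ e) =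
      (Matrix.of fun i j : Fin n => if x j ∣ x i then (1 : ℤ) else 0) *
        Matrix.diagonal (fun i => alphaES e (Finset.univ.image x) (x i)) *
        Matrix.transpose (Matrix.of fun i j : Fin n => if x j ∣ x i then (1 : ℤ) else 0) := by
  set S := Finset.univ.image x with hS
  have hposS : ∀ s ∈ S, 0 < s := by
    intro s hs
    obtain ⟨k, -, rfl⟩ := Finset.mem_image.mp hs
    exact hpos k
  have hgcdS : ∀ a ∈ S, ∀ b ∈ S, Nat.gcd a b ∈ S := by
    intro a ha b hb
    obtain ⟨i, -, rfl⟩ := Finset.mem_image.mp ha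
    obtain ⟨j, -, rfl⟩ := Finset.mem_image.mp hb
    obtain ⟨k, hk⟩ := hgcd i j
    exact Finset.mem_image.mpr ⟨k, Finset.mem_univ k, hk⟩
  ext i j
  rw [Matrix.mul_apply]
  simp only [Matrix.mul_diagonal, Matrix.transpose_apply, Matrix.of_apply]
  set g := Nat.gcd (x i) (x j) with hg
  have hgS : g ∈ S := by
    obtain ⟨k, hk⟩ := hgcd i j
    exact Finset.mem_image.mpr ⟨k, Finset.mem_univ k, hk⟩
  have hstep : ∀ k : Fin n,
      (if x k ∣ x i then (1 : ℤ) else 0) * alphaES e S (x k) *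
        (if x k ∣ x j then (1 : ℤ) else 0) =
      if x k ∣ g then alphaES e S (x k) else 0 := by
    intro k
    by_cases h1 : x k ∣ x i <;> by_cases h2 : x k ∣ x j <;>
      simp [h1, h2, hg, Nat.dvd_gcd_iff]
  calc (g : ℤ) ^ e
      = ∑ s ∈ S.filter (· ∣ g), alphaES e S s :=
        (sum_alpha e S hposS hgcdS hgS).symm
    _ = ∑ k : Fin n, if x k ∣ g then alphaES e S (x k) else 0 := by
        rw [show S.filter (· ∣ g) =
            (Finset.univ.filter (fun k : Fin n => x k ∣ g)).image x by
          rw [hS, Finset.filter_image]]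
        rw [Finset.sum_image (fun a _ b _ h => hinj h), Finset.sum_filter]
    _ = ∑ k : Fin n,
        (if x k ∣ x i then (1 : ℤ) else 0) * alphaES e S (x k) *
          (if x k ∣ x j then (1 : ℤ) else 0) := by
        exact Finset.sum_congr rfl fun k _ => (hstep k).symm
end

section
/- Let S be a gcd-closed set of distinct positive integers and e a positive integer. Then α_{e,S}(x) > 0 for every x ∈ S, where α_{e,S}(x) = Σ_{d | x, d ∤ y for all y ∈ S with y < x} (ξ_e * μ)(d). -/
open Finset

/-! `ξ_e * μ` is Jordan's totient `J_e`: it is multiplicative with `J_e(p^(k+1)) = p^((k+1)e) - p^(ke)`,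
hence positive for `e > 0`. Every term of `α_{e,S}(x)` is therefore positive, and the term `d = x`
is present because `x` divides no smaller positive integer. -/

namespace ArithmeticFunction

open scoped ArithmeticFunction.Moebius

theorem pow_mul_moebius_apply_prime_pow {R : Type*} [CommRing R] (e : ℕ) {p : ℕ} (hp : p.Prime)
    (k : ℕ) :
    ((pow e : ArithmeticFunction R) * μ) (p ^ (k + 1)) =
      (p : R) ^ ((k + 1) * e) - (p : R) ^ (k * e) := by
  -- `(ξ_e * μ) * ζ = ξ_e`, so the partial sums over `p^i` are known.
  have partial_sum (n : ℕ) :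
      ∑ i ∈ Finset.range (n + 1), ((pow e : ArithmeticFunction R) * μ) (p ^ i) = (p : R) ^ (n * e) := by
    rw [← Nat.sum_divisors_prime_pow hp, ← coe_mul_zeta_apply, mul_assoc, coe_moebius_mul_coe_zeta,
      mul_one, natCoe_apply, pow_apply, if_neg (by simp [hp.ne_zero])]
    push_cast
    rw [← pow_mul, mul_comm]
  rw [← partial_sum (k + 1), ← partial_sum k, Finset.sum_range_succ _ (k + 1), add_sub_cancel_left]

theorem pow_mul_moebius_pos {e : ℕ} (he : 0 < e) {n : ℕ} (hn : n ≠ 0) :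
    0 < ((pow e : ArithmeticFunction ℤ) * μ) n := by
  have hmul : IsMultiplicative ((pow e : ArithmeticFunction ℤ) * μ) :=
    isMultiplicative_pow.natCast.mul isMultiplicative_moebius
  rw [hmul.multiplicative_factorization _ hn]
  refine Finset.prod_pos fun p hp => ?_
  have hp' : p.Prime := Nat.prime_of_mem_primeFactors hp
  obtain ⟨k, hk⟩ := Nat.exists_eq_add_one_of_ne_zero (Finsupp.mem_support_iff.mp hp)
  dsimp only
  rw [hk, ← intCoe_int μ, pow_mul_moebius_apply_prime_pow e hp', sub_pos]
  exact pow_lt_pow_right₀ (by exact_mod_cast hp'.one_lt) (by nlinarith)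

end ArithmeticFunction

open ArithmeticFunction in
theorem xiMu_eq_pow_mul_moebius (e d : ℕ) :
    xiMu e d = ((pow e : ArithmeticFunction ℤ) * moebius) d := by
  rw [xiMu, mul_apply,
    Nat.sum_divisorsAntidiagonal fun a b => (pow e : ArithmeticFunction ℤ) a * moebius b]
  refine Finset.sum_congr rfl fun a ha => ?_
  rw [natCoe_apply, pow_apply, if_neg fun h => (Nat.pos_of_mem_divisors ha).ne' h.2]
  push_cast
  rfl

theorem xiMu_pos {e : ℕ} (he : 0 < e) {d : ℕ} (hd : d ≠ 0) : 0 < xiMu e d :=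
  xiMu_eq_pow_mul_moebius e d ▸ ArithmeticFunction.pow_mul_moebius_pos he hd

theorem alphaES_pos_general (e : ℕ) (he : 0 < e) (S : Finset ℕ)
    (hpos : ∀ a ∈ S, 0 < a) :
    ∀ x ∈ S, 0 < alphaES e S x := by
  intro x hx
  have hx0 : x ≠ 0 := (hpos x hx).ne'
  refine Finset.sum_pos (fun d hd => xiMu_pos he (Nat.pos_of_mem_divisors (mem_filter.mp hd).1).ne')
    ⟨x, mem_filter.mpr ⟨Nat.mem_divisors_self x hx0, fun y hy hyx hxy => ?_⟩⟩
  exact (Nat.le_of_dvd (hpos y hy) hxy).not_gt hyx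

theorem alphaES_pos (e : ℕ) (he : 0 < e) (S : Finset ℕ)
    (hpos : ∀ a ∈ S, 0 < a) (hgcd : ∀ a ∈ S, ∀ b ∈ S, Nat.gcd a b ∈ S) :
    ∀ x ∈ S, 0 < alphaES e S x :=
  alphaES_pos_general e he S hpos
end

section
/- Let S be a gcd-closed set, x ∈ S satisfying condition C, with greatest-type divisor set G_S(x) = {y_1, ..., y_l}, l ≥ 3. If I and J are distinct nonempty subsets of {1,...,l}, then gcd{y_i : i ∈ I} ≠ gcd{y_j : j ∈ J}. -/
open Finset

lemma nat_lcm_gcd_distrib {a b c : ℕ} (ha : a ≠ 0) (hb : b ≠ 0) (hc : c ≠ 0) :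
    Nat.lcm (Nat.gcd a b) c = Nat.gcd (Nat.lcm a c) (Nat.lcm b c) := by
  have hg : Nat.gcd a b ≠ 0 := fun h => ha (Nat.eq_zero_of_gcd_eq_zero_left h)
  have hl1 : Nat.lcm a c ≠ 0 := Nat.lcm_ne_zero ha hc
  have hl2 : Nat.lcm b c ≠ 0 := Nat.lcm_ne_zero hb hc
  apply Nat.eq_of_factorization_eq (Nat.lcm_ne_zero hg hc)
    (fun h => hl1 (Nat.eq_zero_of_gcd_eq_zero_left h))
  intro p
  rw [Nat.factorization_lcm hg hc, Nat.factorization_gcd ha hb,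
    Nat.factorization_gcd hl1 hl2, Nat.factorization_lcm ha hc,
    Nat.factorization_lcm hb hc]
  simp only [Finsupp.sup_apply, Finsupp.inf_apply]
  exact max_min_distrib_right _ _ _

theorem gcd_subsets_distinct (S : Finset ℕ) (hpos : ∀ a ∈ S, 0 < a)
    (hgcd : ∀ a ∈ S, ∀ b ∈ S, Nat.gcd a b ∈ S)
    (x : ℕ) (hx : x ∈ S) (hC : condCElem S x)
    (l : ℕ) (hl : 3 ≤ l) (y : Fin l → ℕ) (hinj : Function.Injective y)
    (hGS : GS S x = Finset.univ.image y) :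
    ∀ I J : Finset (Fin l), I.Nonempty → J.Nonempty → I ≠ J →
      I.gcd y ≠ J.gcd y := by
  have hmem : ∀ i, y i ∈ GS S x := by
    intro i; rw [hGS]; exact Finset.mem_image.mpr ⟨i, Finset.mem_univ i, rfl⟩
  have hyS : ∀ i, y i ∈ S := fun i => (Finset.mem_filter.mp (hmem i)).1
  have hylt : ∀ i, y i < x := fun i => (Finset.mem_filter.mp (hmem i)).2.2.1
  have hypos : ∀ i, 0 < y i := fun i => hpos _ (hyS i)
  have hlcm : ∀ i j, i ≠ j → Nat.lcm (y i) (y j) = x := fun i j hij =>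
    (hC _ (hmem i) _ (hmem j) fun h => hij (hinj h)).1
  have hgcdpos : ∀ I : Finset (Fin l), I.Nonempty → I.gcd y ≠ 0 := by
    intro I ⟨i, hi⟩ h
    exact (hypos i).ne' (Finset.gcd_eq_zero_iff.mp h i hi)
  have hkey : ∀ I : Finset (Fin l), (hI : I.Nonempty) → ∀ j ∉ I,
      Nat.lcm (I.gcd y) (y j) = x := by
    intro I hI
    induction hI using Finset.Nonempty.cons_induction with
    | singleton i =>
      intro j hj
      have : ({i} : Finset (Fin l)).gcd y = y i := by
        simp [Finset.gcd_singleton]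
      rw [this]
      exact hlcm i j fun h => hj (by simp [h])
    | cons i s hi hs ih =>
      intro j hj
      have hj1 : j ≠ i := fun h => hj (by simp [h, Finset.mem_cons])
      have hj2 : j ∉ s := fun h => hj (Finset.mem_cons.mpr (Or.inr h))
      have hg : (Finset.cons i s hi).gcd y = Nat.gcd (y i) (s.gcd y) := by
        rw [Finset.cons_eq_insert, Finset.gcd_insert]; rfl
      rw [hg, nat_lcm_gcd_distrib (hypos i).ne' (hgcdpos s hs) (hypos j).ne',
        hlcm i j fun h => hj1 h.symm, ih j hj2, Nat.gcd_self]
  have main : ∀ I J : Finset (Fin l), I.Nonempty → (∃ j ∈ J, j ∉ I) →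
      I.gcd y ≠ J.gcd y := by
    rintro I J hI ⟨j, hjJ, hjI⟩ heq
    have h1 : I.gcd y ∣ y j := heq ▸ Finset.gcd_dvd hjJ
    have h2 : x ∣ y j := hkey I hI j hjI ▸ Nat.lcm_dvd h1 dvd_rfl
    exact absurd (Nat.le_of_dvd (hypos j) h2) (not_le.mpr (hylt j))
  intro I J hI hJ hne
  by_cases h : J ⊆ I
  · obtain ⟨i, hiI, hiJ⟩ := Finset.exists_of_ssubset (h.ssubset_of_ne (Ne.symm hne))
    exact (main J I hJ ⟨i, hiI, hiJ⟩).symm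
  · obtain ⟨j, hjJ, hjI⟩ := Finset.not_subset.mp h
    exact main I J hI ⟨j, hjJ, hjI⟩
end

section
/- Let S be a gcd-closed set, L = {1,...,l} with l ≥ 3, x ∈ S with greatest-type divisor set G_S(x) = {y_1,...,y_l}, and suppose A_S(gcd{y_1,...,y_l}, x) satisfies condition C. Then for any i ∈ L and nonempty I ⊆ L \ {i}, gcd{y_j : j ∈ I ∪ {i}} is a greatest-type divisor in S of gcd{y_j : j ∈ I}. -/
open Finset

lemma mem_GS_iff {S : Finset ℕ} {x u : ℕ} :
    u ∈ GS S x ↔ u ∈ S ∧ u ∣ x ∧ u < x ∧ ∀ z ∈ S, u ∣ z → z ∣ x → z = u ∨ z = x := by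
  simp [GS]

lemma mem_AS_iff {S : Finset ℕ} {a b u : ℕ} :
    u ∈ AS S a b ↔ u ∈ S ∧ a ∣ u ∧ u ∣ b ∧ u ≠ a := by
  simp [AS]

lemma gcd_lcm_distrib' (d a b : ℕ) (hd : d ≠ 0) (ha : a ≠ 0) (hb : b ≠ 0) :
    Nat.gcd d (Nat.lcm a b) = Nat.lcm (Nat.gcd d a) (Nat.gcd d b) := by
  have hga : Nat.gcd d a ≠ 0 := fun h => hd (Nat.eq_zero_of_gcd_eq_zero_left h)
  have hgb : Nat.gcd d b ≠ 0 := fun h => hd (Nat.eq_zero_of_gcd_eq_zero_left h)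
  have hl : Nat.lcm a b ≠ 0 := Nat.lcm_ne_zero ha hb
  have h1 : Nat.gcd d (Nat.lcm a b) ≠ 0 := fun h => hd (Nat.eq_zero_of_gcd_eq_zero_left h)
  have h2 : Nat.lcm (Nat.gcd d a) (Nat.gcd d b) ≠ 0 := Nat.lcm_ne_zero hga hgb
  apply Nat.dvd_antisymm
  · rw [← Nat.factorization_le_iff_dvd h1 h2,
      Nat.factorization_gcd hd hl, Nat.factorization_lcm hga hgb,
      Nat.factorization_lcm ha hb, Nat.factorization_gcd hd ha, Nat.factorization_gcd hd hb,
      Finsupp.le_iff]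
    intro p _
    simp only [Finsupp.inf_apply, Finsupp.sup_apply]
    exact le_of_eq (inf_sup_left _ _ _)
  · exact Nat.lcm_dvd
      (Nat.dvd_gcd (Nat.gcd_dvd_left _ _) ((Nat.gcd_dvd_right _ _).trans (Nat.dvd_lcm_left _ _)))
      (Nat.dvd_gcd (Nat.gcd_dvd_left _ _) ((Nat.gcd_dvd_right _ _).trans (Nat.dvd_lcm_right _ _)))

lemma gcd4 (a b c : ℕ) : Nat.gcd a (Nat.gcd b c) = Nat.gcd (Nat.gcd a c) (Nat.gcd b c) := by
  apply Nat.dvd_antisymm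
  · exact Nat.dvd_gcd
      (Nat.dvd_gcd (Nat.gcd_dvd_left _ _) ((Nat.gcd_dvd_right _ _).trans (Nat.gcd_dvd_right _ _)))
      (Nat.gcd_dvd_right _ _)
  · exact Nat.dvd_gcd ((Nat.gcd_dvd_left _ _).trans (Nat.gcd_dvd_left _ _)) (Nat.gcd_dvd_right _ _)

theorem gcd_insert_mem_GS (S : Finset ℕ) (hpos : ∀ a ∈ S, 0 < a)
    (hgcd : ∀ a ∈ S, ∀ b ∈ S, Nat.gcd a b ∈ S)
    (l : ℕ) (hl : 3 ≤ l) (x : ℕ) (hx : x ∈ S)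
    (y : Fin l → ℕ) (hinj : Function.Injective y)
    (hGS : GS S x = Finset.univ.image y)
    (hC : condCSet (AS S (Finset.univ.gcd y) x)) :
    ∀ i : Fin l, ∀ I : Finset (Fin l), I.Nonempty → i ∉ I →
      (insert i I).gcd y ∈ GS S (I.gcd y) := by
  intro i I hIne hiI
  set g := Finset.univ.gcd y with hg
  set T := AS S g x with hTdef
  have hlpos : 0 < l := by omega
  have hyGS : ∀ j, y j ∈ GS S x := fun j => by
    rw [hGS]; exact Finset.mem_image.2 ⟨j, Finset.mem_univ j, rfl⟩
  have hyS : ∀ j, y j ∈ S := fun j => (mem_GS_iff.1 (hyGS j)).1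
  have hydvd : ∀ j, y j ∣ x := fun j => (mem_GS_iff.1 (hyGS j)).2.1
  have hylt : ∀ j, y j < x := fun j => (mem_GS_iff.1 (hyGS j)).2.2.1
  have hymax : ∀ j, ∀ z ∈ S, y j ∣ z → z ∣ x → z = y j ∨ z = x :=
    fun j => (mem_GS_iff.1 (hyGS j)).2.2.2
  have hgdvd : ∀ j, g ∣ y j := fun j => Finset.gcd_dvd (Finset.mem_univ j)
  have hypos : ∀ j, 0 < y j := fun j => hpos _ (hyS j)
  have hyne_g : ∀ j, y j ≠ g := by
    intro j hj
    have : Nontrivial (Fin l) := Fin.nontrivial_iff_two_le.mpr (by omega)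
    obtain ⟨k, hk⟩ := exists_ne j
    rcases hymax j (y k) (hyS k) (hj ▸ hgdvd k) (hydvd k) with h | h
    · exact hk (hinj h)
    · exact absurd h (hylt k).ne
  have hgx : g ∣ x := (hgdvd ⟨0, hlpos⟩).trans (hydvd _)
  have hxg : x ≠ g := by
    intro h
    have h1 := Nat.le_of_dvd (hypos ⟨0, hlpos⟩) (hgdvd ⟨0, hlpos⟩)
    have h2 := hylt ⟨0, hlpos⟩
    omega
  have hxT : x ∈ T := mem_AS_iff.2 ⟨hx, hgx, dvd_rfl, hxg⟩
  have hyT : ∀ j, y j ∈ T := fun j => mem_AS_iff.2 ⟨hyS j, hgdvd j, hydvd j, hyne_g j⟩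
  -- gcds of nonempty subsets lie in S
  have hgcdS : ∀ J : Finset (Fin l), J.Nonempty → J.gcd y ∈ S := by
    intro J hJ
    induction J using Finset.induction with
    | empty => exact absurd hJ (by simp)
    | @insert a J ha IH =>
      rcases J.eq_empty_or_nonempty with h | h
      · subst h; simpa using hyS a
      · rw [Finset.gcd_insert]
        exact hgcd _ (hyS a) _ (IH h)
  -- GS T w ⊆ GS S w for w ∣ x
  have hGSsub : ∀ w, w ∣ x → GS T w ⊆ GS S w := by
    intro w hw u hu
    rw [mem_GS_iff] at hu ⊢
    obtain ⟨huT, hud, hult, humax⟩ := hu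
    obtain ⟨huS, hgu, hux, hune⟩ := mem_AS_iff.1 huT
    refine ⟨huS, hud, hult, ?_⟩
    intro z hz hduz hzw
    have hzg : z ≠ g := fun h => hune (Nat.dvd_antisymm (h ▸ hduz) hgu)
    exact humax z (mem_AS_iff.2 ⟨hz, hgu.trans hduz, hzw.trans hw, hzg⟩) hduz hzw
  have hyGT : ∀ j, y j ∈ GS T x := by
    intro j
    rw [mem_GS_iff]
    exact ⟨hyT j, hydvd j, hylt j, fun z hz => hymax j z (mem_AS_iff.1 hz).1⟩
  have hcard2 : ∀ w u v, u ∈ GS T w → v ∈ GS T w → u ≠ v → 2 ≤ (GS T w).card :=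
    fun w u v hu hv huv => Finset.one_lt_card.2 ⟨u, hu, v, hv, huv⟩
  have hlcm : ∀ i j : Fin l, i ≠ j → Nat.lcm (y i) (y j) = x := by
    intro i j hij
    exact (hC x hxT (hcard2 x (y i) (y j) (hyGT i) (hyGT j) (hinj.ne hij))
      (y i) (hyGT i) (y j) (hyGT j) (hinj.ne hij)).1
  have hbase : ∀ i j : Fin l, i ≠ j → Nat.gcd (y i) (y j) ∈ GS T (y j) := by
    intro i j hij
    have h := (hC x hxT (hcard2 x (y i) (y j) (hyGT i) (hyGT j) (hinj.ne hij))
      (y i) (hyGT i) (y j) (hyGT j) (hinj.ne hij)).2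
    exact (Finset.mem_inter.1 h).2
  -- main induction
  have main : ∀ n : ℕ, ∀ I : Finset (Fin l), I.card = n → I.Nonempty → ∀ i, i ∉ I →
      (insert i I).gcd y ∈ GS T (I.gcd y) := by
    intro n
    induction n using Nat.strong_induction_on with
    | _ n IH =>
    intro I hcard hne i hiI
    obtain ⟨j, hjI⟩ := hne
    by_cases hI' : (I.erase j).Nonempty
    · -- inductive step
      set I' := I.erase j with hI'def
      have hjI' : j ∉ I' := Finset.notMem_erase j I
      have hiI' : i ∉ I' := fun h => hiI (Finset.mem_of_mem_erase h)
      have hij : i ≠ j := fun h => hiI (h ▸ hjI)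
      have hcard' : I'.card < n := by
        rw [← hcard]; exact Finset.card_erase_lt_of_mem hjI
      have hu := IH I'.card hcard' I' rfl hI' i hiI'
      have hv := IH I'.card hcard' I' rfl hI' j hjI'
      have hins : insert j I' = I := Finset.insert_erase hjI
      set d' := I'.gcd y with hd'def
      have hueq : (insert i I').gcd y = Nat.gcd (y i) d' := Finset.gcd_insert
      have hveq : I.gcd y = Nat.gcd (y j) d' := by rw [← hins]; exact Finset.gcd_insert
      rw [hueq] at hu
      rw [hins] at hv
      set u := Nat.gcd (y i) d' with hudef
      obtain ⟨k, hk⟩ := hI'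
      have hd'S : d' ∈ S := hgcdS I' ⟨k, hk⟩
      have hd'pos : 0 < d' := hpos _ hd'S
      have hd'x : d' ∣ x := (Finset.gcd_dvd hk).trans (hydvd k)
      -- u ≠ I.gcd y
      have hult : u < d' := (mem_GS_iff.1 hu).2.2.1
      have hune : u ≠ I.gcd y := by
        intro heq
        have hd : d' = Nat.lcm u (Nat.gcd (y j) d') := by
          have h1 : Nat.gcd d' x = d' := Nat.gcd_eq_left hd'x
          calc d' = Nat.gcd d' (Nat.lcm (y i) (y j)) := by rw [hlcm i j hij, h1]
            _ = Nat.lcm (Nat.gcd d' (y i)) (Nat.gcd d' (y j)) :=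
                gcd_lcm_distrib' _ _ _ hd'pos.ne' (hypos i).ne' (hypos j).ne'
            _ = Nat.lcm u (Nat.gcd (y j) d') := by
                rw [hudef, Nat.gcd_comm d' (y i), Nat.gcd_comm d' (y j)]
        rw [heq, hveq] at hd
        rw [Nat.lcm_self] at hd
        rw [heq, hveq] at hult
        omega
      -- d' ∈ T
      have huT : u ∈ T := (mem_GS_iff.1 hu).1
      have hugd : g ∣ u := (mem_AS_iff.1 huT).2.1
      have hd'T : d' ∈ T := by
        refine mem_AS_iff.2 ⟨hd'S, hugd.trans (Nat.gcd_dvd_right _ _), hd'x, ?_⟩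
        intro h
        exact (mem_AS_iff.1 huT).2.2.2
          (Nat.dvd_antisymm (h ▸ (Nat.gcd_dvd_right (y i) d')) hugd)
      rw [hveq] at hv
      have h := (hC d' hd'T (hcard2 d' u _ hu hv (by rw [hveq] at hune; exact hune))
        u hu _ hv (by rw [hveq] at hune; exact hune)).2
      have hmem : Nat.gcd u (Nat.gcd (y j) d') ∈ GS T (Nat.gcd (y j) d') :=
        (Finset.mem_inter.1 h).2
      have hfinal : (insert i I).gcd y = Nat.gcd u (Nat.gcd (y j) d') := by
        have : (insert i I).gcd y = Nat.gcd (y i) (I.gcd y) := Finset.gcd_insert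
        rw [this, hveq, hudef]
        exact gcd4 _ _ _
      rw [hfinal, hveq]
      exact hmem
    · -- base case : I = {j}
      have hIj : I = {j} := by
        apply Finset.eq_singleton_iff_unique_mem.2
        refine ⟨hjI, fun b hb => ?_⟩
        by_contra hbj
        exact hI' ⟨b, Finset.mem_erase.2 ⟨hbj, hb⟩⟩
      subst hIj
      have hij : i ≠ j := fun h => hiI (h ▸ Finset.mem_singleton_self j)
      have h1 : ({j} : Finset (Fin l)).gcd y = y j := by simp
      have h2 : (insert i ({j} : Finset (Fin l))).gcd y = Nat.gcd (y i) (({j} : Finset (Fin l)).gcd y) :=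
        Finset.gcd_insert
      rw [h2, h1]
      exact hbase i j hij
  have hIx : I.gcd y ∣ x := by
    obtain ⟨k, hk⟩ := hIne
    exact (Finset.gcd_dvd hk).trans (hydvd k)
  exact hGSsub _ hIx (main I.card I rfl hIne i hiI)
end

section
/- Let S be a gcd-closed set, L = {1,...,l} with l ≥ 3, x ∈ S with G_S(x) = {y_1,...,y_l}, and suppose A_S(gcd{y_1,...,y_l}, x) satisfies condition C. Then for any i ∈ L, any nonempty I ⊆ L \ {i}, and any z ∈ S with gcd(z,x) ∤ y_i, it holds that gcd(z, gcd{y_j : j ∈ I}) ∤ y_i. -/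
open Finset

theorem gcd_not_dvd_of_gcd_not_dvd (S : Finset ℕ) (hpos : ∀ a ∈ S, 0 < a)
    (hgcd : ∀ a ∈ S, ∀ b ∈ S, Nat.gcd a b ∈ S)
    (l : ℕ) (hl : 3 ≤ l) (x : ℕ) (hx : x ∈ S)
    (y : Fin l → ℕ) (hinj : Function.Injective y)
    (hGS : GS S x = Finset.univ.image y)
    (hC : condCSet (AS S (Finset.univ.gcd y) x)) :
    ∀ i : Fin l, ∀ I : Finset (Fin l), I.Nonempty → i ∉ I →
      ∀ z ∈ S, ¬ Nat.gcd z x ∣ y i → ¬ Nat.gcd z (I.gcd y) ∣ y i := by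
  intro i I hIne hiI z hz hzx hcon
  apply hzx
  -- basic facts about the y j
  have hyGS : ∀ j, y j ∈ GS S x := by
    intro j; rw [hGS]; exact Finset.mem_image_of_mem y (Finset.mem_univ j)
  have hyS : ∀ j, y j ∈ S := fun j => (Finset.mem_filter.1 (hyGS j)).1
  have hyprop : ∀ j, y j ∣ x ∧ y j < x ∧ ∀ t ∈ S, y j ∣ t → t ∣ x → t = y j ∨ t = x :=
    fun j => (Finset.mem_filter.1 (hyGS j)).2
  have hxpos : 0 < x := hpos x hx
  have hzpos : 0 < z := hpos z hz
  have hypos : ∀ j, 0 < y j := fun j => hpos _ (hyS j)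
  set Y := Finset.univ.gcd y with hY
  -- y j ≠ Y
  have hyne : ∀ j, y j ≠ Y := by
    intro j hj
    have h0 : (0:ℕ) < l := by omega
    have h1 : (1:ℕ) < l := by omega
    obtain ⟨k, hk⟩ : ∃ k : Fin l, k ≠ j := by
      by_cases hj0 : j = ⟨0, h0⟩
      · exact ⟨⟨1, h1⟩, by simp [hj0, Fin.ext_iff]⟩
      · exact ⟨⟨0, h0⟩, fun h => hj0 h.symm⟩
    have hYk : y j ∣ y k := hj ▸ Finset.gcd_dvd (Finset.mem_univ k)
    rcases (hyprop j).2.2 (y k) (hyS k) hYk (hyprop k).1 with h | h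
    · exact hk (hinj h)
    · exact absurd h (Nat.ne_of_lt (hyprop k).2.1)
  have hYx : Y ∣ x := dvd_trans (Finset.gcd_dvd (Finset.mem_univ i)) (hyprop i).1
  set A := AS S Y x with hA
  have hyA : ∀ j, y j ∈ GS A x := by
    intro j
    refine Finset.mem_filter.2 ⟨?_, (hyprop j).1, (hyprop j).2.1, ?_⟩
    · exact Finset.mem_filter.2
        ⟨hyS j, Finset.gcd_dvd (Finset.mem_univ j), (hyprop j).1, hyne j⟩
    · intro t ht htd htx
      exact (hyprop j).2.2 t (Finset.mem_filter.1 ht).1 htd htx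
  have hxA : x ∈ A := by
    refine Finset.mem_filter.2 ⟨hx, hYx, dvd_refl x, ?_⟩
    intro hxY
    have hxyi : x ∣ y i := by rw [hxY]; exact Finset.gcd_dvd (Finset.mem_univ i)
    have h1 := Nat.le_of_dvd (hypos i) hxyi
    have h2 := (hyprop i).2.1
    omega
  have hcard : 2 ≤ (GS A x).card := by
    have h0 : (0:ℕ) < l := by omega
    have h1 : (1:ℕ) < l := by omega
    have hne : y ⟨0, h0⟩ ≠ y ⟨1, h1⟩ := by
      intro h; have := hinj h; simp [Fin.ext_iff] at this
    have := Finset.one_lt_card.2 ⟨y ⟨0, h0⟩, hyA _, y ⟨1, h1⟩, hyA _, hne⟩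
    omega
  have hlcm : ∀ j k : Fin l, j ≠ k → Nat.lcm (y j) (y k) = x := by
    intro j k hjk
    exact ((hC x hxA hcard) (y j) (hyA j) (y k) (hyA k) (fun h => hjk (hinj h))).1
  -- main argument via factorizations
  have hz0 : z ≠ 0 := hzpos.ne'
  have hx0 : x ≠ 0 := hxpos.ne'
  have hyi0 : y i ≠ 0 := (hypos i).ne'
  obtain ⟨j0, hj0⟩ := hIne
  have hgI0 : I.gcd y ≠ 0 := by
    intro h
    have : I.gcd y ∣ y j0 := Finset.gcd_dvd hj0
    rw [h] at this
    exact (hypos j0).ne' (Nat.eq_zero_of_zero_dvd this)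
  have hwg0 : Nat.gcd z (I.gcd y) ≠ 0 := fun h => hz0 (Nat.eq_zero_of_gcd_eq_zero_left h)
  have hg0 : Nat.gcd z x ≠ 0 := fun h => hz0 (Nat.eq_zero_of_gcd_eq_zero_left h)
  rw [← Nat.factorization_le_iff_dvd hg0 hyi0]
  rw [Nat.factorization_gcd hz0 hx0]
  intro p
  rw [Finsupp.inf_apply]
  by_cases hzp : z.factorization p ≤ (y i).factorization p
  · exact le_trans inf_le_left hzp
  push_neg at hzp
  have hp : p.Prime := by
    by_contra hpp
    rw [Nat.factorization_eq_zero_of_not_prime z hpp] at hzp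
    omega
  have hw : (Nat.gcd z (I.gcd y)).factorization ≤ (y i).factorization :=
    (Nat.factorization_le_iff_dvd hwg0 hyi0).2 hcon
  have hwp := hw p
  rw [Nat.factorization_gcd hz0 hgI0, Finsupp.inf_apply] at hwp
  have hgIp : (I.gcd y).factorization p ≤ (y i).factorization p := by
    rcases inf_le_iff.1 hwp with h | h
    · omega
    · exact h
  obtain ⟨j1, hj1I, hj1⟩ : ∃ j1 ∈ I, (y j1).factorization p ≤ (y i).factorization p := by
    by_contra hcontra
    push_neg at hcontra
    have hdvd : p ^ ((y i).factorization p + 1) ∣ I.gcd y := by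
      apply Finset.dvd_gcd
      intro k hk
      exact (Nat.Prime.pow_dvd_iff_le_factorization hp (hypos k).ne').2 (hcontra k hk)
    have := (Nat.Prime.pow_dvd_iff_le_factorization hp hgI0).1 hdvd
    omega
  have hij1 : i ≠ j1 := fun h => hiI (h ▸ hj1I)
  have hxf : x.factorization p = (y i).factorization p := by
    have := hlcm i j1 hij1
    have hfl : x.factorization =
        (y i).factorization ⊔ (y j1).factorization := by
      rw [← this, Nat.factorization_lcm (hypos i).ne' (hypos j1).ne']
    have := congrArg (fun f => f p) hfl
    simp only [Finsupp.sup_apply] at this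
    omega
  calc z.factorization p ⊓ x.factorization p ≤ x.factorization p := inf_le_right
    _ = (y i).factorization p := hxf
end

section
/- Let S = {x_1,...,x_n} be gcd-closed, 1 ≤ k, m ≤ n, G_S(x_m) = {y_1,...,y_l}. Then Σ_{x_r | x_m, x_r ∈ S} c_{rm} · lcm(x_k, x_r)^e = lcm(x_k, x_m)^e + Σ_{∅ ≠ I ⊆ {1,...,l}} (-1)^{|I|} · lcm(x_k, gcd{y_i : i ∈ I})^e, where c_{rm} = Σ_{d : d·x_r | x_m, d·x_r ∤ x_t for all x_t ∈ S with x_t < x_m} μ(d). -/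
open Finset

lemma musum (N : ℕ) :
    (∑ d ∈ N.divisors, (ArithmeticFunction.moebius d : ℤ)) = if N = 1 then 1 else 0 := by
  have := ArithmeticFunction.coe_mul_zeta_apply (f := (ArithmeticFunction.moebius)) (x := N)
  rw [ArithmeticFunction.moebius_mul_coe_zeta] at this
  rw [← this, ArithmeticFunction.one_apply]

lemma gcd_lcomm (a b c : ℕ) : Nat.gcd a (Nat.gcd b c) = Nat.gcd b (Nat.gcd a c) := by
  rw [← Nat.gcd_assoc, Nat.gcd_comm a b, Nat.gcd_assoc]

theorem sum_cCoef_lcm_eq (n e : ℕ) (he : 0 < e) (x : Fin n → ℕ)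
    (hinj : Function.Injective x) (hpos : ∀ i, 0 < x i)
    (hgcd : ∀ i j : Fin n, ∃ t, x t = Nat.gcd (x i) (x j))
    (k m : Fin n) (l : ℕ) (y : Fin l → ℕ) (hyinj : Function.Injective y)
    (hGS : GS (Finset.univ.image x) (x m) = Finset.univ.image y) :
    (∑ r ∈ Finset.univ.filter (fun r : Fin n => x r ∣ x m),
        cCoef (Finset.univ.image x) (x r) (x m) * ((Nat.lcm (x k) (x r) : ℕ) : ℤ) ^ e) =
      ((Nat.lcm (x k) (x m) : ℕ) : ℤ) ^ e +
        ∑ I ∈ Finset.univ.powerset.filter (fun I : Finset (Fin l) => I ≠ ∅),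
          (-1 : ℤ) ^ I.card * ((Nat.lcm (x k) (I.gcd y) : ℕ) : ℤ) ^ e := by
  classical
  set S := Finset.univ.image x with hSdef
  set xm := x m with hxmdef
  have hxm0 : xm ≠ 0 := (hpos m).ne'
  have hSpos : ∀ t ∈ S, 0 < t := by
    intro t ht
    obtain ⟨a, -, rfl⟩ := mem_image.mp ht
    exact hpos a
  have hScl : ∀ a ∈ S, ∀ b ∈ S, Nat.gcd a b ∈ S := by
    intro a ha b hb
    obtain ⟨i, -, rfl⟩ := mem_image.mp ha
    obtain ⟨j, -, rfl⟩ := mem_image.mp hb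
    obtain ⟨t, ht⟩ := hgcd i j
    exact mem_image.mpr ⟨t, mem_univ t, ht⟩
  have hmS : xm ∈ S := mem_image.mpr ⟨m, mem_univ m, rfl⟩
  have hyGS : ∀ i, y i ∈ GS S xm := by
    intro i
    rw [hGS]
    exact mem_image_of_mem y (mem_univ i)
  have hy : ∀ i, y i ∈ S ∧ y i ∣ xm ∧ y i < xm := by
    intro i
    have := hyGS i
    simp only [GS, mem_filter] at this
    exact ⟨this.1, this.2.1, this.2.2.1⟩
  set g : Finset (Fin l) → ℕ := fun J => Nat.gcd xm (J.gcd y) with hgdef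
  have hgdvd : ∀ J, g J ∣ xm := fun J => Nat.gcd_dvd_left _ _
  have hg0 : ∀ J, g J ≠ 0 := by
    intro J h
    exact hxm0 (Nat.eq_zero_of_gcd_eq_zero_left h)
  have hgS : ∀ J : Finset (Fin l), g J ∈ S := by
    intro J
    induction J using Finset.induction_on with
    | empty => simpa [hgdef] using hmS
    | @insert a J ha ih =>
      have : g (insert a J) = Nat.gcd (y a) (g J) := by
        simp only [hgdef, Finset.gcd_insert]
        exact gcd_lcomm xm (y a) (J.gcd y)
      rw [this]
      exact hScl _ (hy a).1 _ ih
  -- condition equivalence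
  have hcond : ∀ w, w ∣ xm → ((∀ t ∈ S, t < xm → ¬ w ∣ t) ↔ ∀ i, ¬ w ∣ y i) := by
    intro w hw
    constructor
    · intro h i
      exact h (y i) (hy i).1 (hy i).2.2
    · intro h t htS htlt hwt
      set gg := Nat.gcd t xm with hggdef
      have hggS : gg ∈ S := hScl t htS xm hmS
      have hggdvd : gg ∣ xm := Nat.gcd_dvd_right _ _
      have hggne : gg ≠ xm := by
        intro hEq
        have h1 : xm ∣ t := hEq ▸ Nat.gcd_dvd_left t xm
        exact absurd (Nat.le_of_dvd (hSpos t htS) h1) (not_le.mpr htlt)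
      set E := S.filter (fun z => gg ∣ z ∧ z ∣ xm ∧ z ≠ xm) with hE
      have hgE : gg ∈ E := by
        simp only [hE, mem_filter]
        exact ⟨hggS, dvd_refl gg, hggdvd, hggne⟩
      have hEne : E.Nonempty := ⟨gg, hgE⟩
      set z := E.max' hEne with hz
      have hzE := E.max'_mem hEne
      rw [← hz] at hzE
      simp only [hE, mem_filter] at hzE
      obtain ⟨hzS, hgz, hzxm, hzne⟩ := hzE
      have hzGS : z ∈ GS S xm := by
        simp only [GS, mem_filter]
        refine ⟨hzS, hzxm, lt_of_le_of_ne (Nat.le_of_dvd (Nat.pos_of_ne_zero hxm0) hzxm) hzne, ?_⟩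
        intro z' hz'S hdz hz'xm
        by_cases h' : z' = xm
        · exact Or.inr h'
        · left
          have hz'E : z' ∈ E := by
            simp only [hE, mem_filter]
            exact ⟨hz'S, dvd_trans hgz hdz, hz'xm, h'⟩
          exact le_antisymm (E.le_max' z' hz'E) (Nat.le_of_dvd (hSpos z' hz'S) hdz)
      rw [hGS] at hzGS
      obtain ⟨i, -, hi⟩ := mem_image.mp hzGS
      exact h i (hi ▸ dvd_trans (Nat.dvd_gcd hwt hw) hgz)
  -- indicator expansion
  have hind : ∀ w : ℕ, (if (∀ i, ¬ w ∣ y i) then (1:ℤ) else 0)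
      = ∑ J ∈ (univ : Finset (Fin l)).powerset,
          (-1:ℤ)^J.card * (if ∀ i ∈ J, w ∣ y i then 1 else 0) := by
    intro w
    set A := (univ : Finset (Fin l)).filter (fun i => w ∣ y i) with hA
    have hterm : ∀ J ∈ (univ : Finset (Fin l)).powerset,
        ((-1:ℤ)^J.card * (if ∀ i ∈ J, w ∣ y i then 1 else 0))
          = if J ⊆ A then (-1:ℤ)^J.card else 0 := by
      intro J _
      by_cases hJ : ∀ i ∈ J, w ∣ y i
      · have hsub : J ⊆ A := fun i hi => mem_filter.mpr ⟨mem_univ i, hJ i hi⟩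
        rw [if_pos hJ, if_pos hsub, mul_one]
      · rw [if_neg hJ, if_neg, mul_zero]
        intro hsub
        exact hJ (fun i hi => (mem_filter.mp (hsub hi)).2)
    rw [Finset.sum_congr rfl hterm, Finset.sum_ite, Finset.sum_const_zero, add_zero]
    have hps : ((univ : Finset (Fin l)).powerset.filter (fun J => J ⊆ A)) = A.powerset := by
      ext J
      simp [Finset.mem_powerset, Finset.subset_univ]
    rw [hps, Finset.sum_powerset_neg_one_pow_card]
    refine if_congr ?_ rfl rfl
    simp [hA, Finset.filter_eq_empty_iff]
  -- per-r coefficient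
  have hc : ∀ r : Fin n, x r ∣ xm →
      cCoef S (x r) xm =
        ∑ J ∈ (univ : Finset (Fin l)).powerset,
          (-1:ℤ)^J.card * (if x r = g J then 1 else 0) := by
    intro r hr
    have hxr0 : 0 < x r := hpos r
    have hinner : ∀ J : Finset (Fin l),
        (∑ d ∈ xm.divisors.filter (fun d => d * x r ∣ xm ∧ ∀ i ∈ J, d * x r ∣ y i),
          (ArithmeticFunction.moebius d : ℤ)) = if x r = g J then 1 else 0 := by
      intro J
      have hfe : xm.divisors.filter (fun d => d * x r ∣ xm ∧ ∀ i ∈ J, d * x r ∣ y i)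
          = xm.divisors.filter (fun d => d * x r ∣ g J) := by
        apply Finset.filter_congr
        intro d _
        constructor
        · rintro ⟨h1, h2⟩
          exact Nat.dvd_gcd h1 (Finset.dvd_gcd h2)
        · intro hdg
          refine ⟨dvd_trans hdg (Nat.gcd_dvd_left _ _), fun i hi => ?_⟩
          exact dvd_trans hdg (dvd_trans (Nat.gcd_dvd_right _ _) (Finset.gcd_dvd hi))
      rw [hfe]
      by_cases hdv : x r ∣ g J
      · obtain ⟨N, hN⟩ := hdv
        have hN0 : N ≠ 0 := by
          intro h
          exact hg0 J (by rw [hN, h, mul_zero])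
        have hset : xm.divisors.filter (fun d => d * x r ∣ g J) = N.divisors := by
          ext d
          simp only [mem_filter, Nat.mem_divisors]
          constructor
          · rintro ⟨⟨_, _⟩, hdxr⟩
            refine ⟨?_, hN0⟩
            have h1 : x r * d ∣ x r * N := by rw [mul_comm (x r) d, ← hN]; exact hdxr
            exact (mul_dvd_mul_iff_left hxr0.ne').mp h1
          · rintro ⟨hdN, -⟩
            have h1 : d * x r ∣ g J := by
              rw [hN, mul_comm]
              exact mul_dvd_mul_left _ hdN
            exact ⟨⟨dvd_trans (dvd_trans (dvd_mul_right d (x r)) h1) (hgdvd J), hxm0⟩, h1⟩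
        have hiff : x r = x r * N ↔ N = 1 := by
          constructor
          · intro h
            have h' : x r * 1 = x r * N := by rw [mul_one]; exact h
            exact (Nat.eq_of_mul_eq_mul_left hxr0 h').symm
          · intro h; rw [h, mul_one]
        rw [hset, musum N, hN]
        exact if_congr hiff.symm rfl rfl
      · have hset : xm.divisors.filter (fun d => d * x r ∣ g J) = ∅ := by
          apply Finset.filter_eq_empty_iff.mpr
          intro d _ hcon
          exact hdv (dvd_trans (dvd_mul_left (x r) d) hcon)
        rw [hset, Finset.sum_empty, if_neg]
        intro h
        exact hdv (h ▸ dvd_refl _)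
    have h1 : cCoef S (x r) xm
        = ∑ d ∈ xm.divisors.filter (fun d => d * x r ∣ xm),
            (ArithmeticFunction.moebius d : ℤ) *
              (if (∀ i, ¬ d * x r ∣ y i) then 1 else 0) := by
      have hfc : xm.divisors.filter (fun d => d * x r ∣ xm ∧ ∀ t ∈ S, t < xm → ¬ d * x r ∣ t)
          = xm.divisors.filter (fun d => d * x r ∣ xm ∧ ∀ i, ¬ d * x r ∣ y i) := by
        apply Finset.filter_congr
        intro d _
        constructor
        · rintro ⟨h1, h2⟩; exact ⟨h1, (hcond _ h1).mp h2⟩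
        · rintro ⟨h1, h2⟩; exact ⟨h1, (hcond _ h1).mpr h2⟩
      unfold cCoef
      rw [hfc, ← Finset.filter_filter, Finset.sum_filter]
      apply Finset.sum_congr rfl
      intro d _
      by_cases hP : ∀ i, ¬ d * x r ∣ y i
      · rw [if_pos hP, if_pos hP, mul_one]
      · rw [if_neg hP, if_neg hP, mul_zero]
    rw [h1]
    have h2 : ∀ d ∈ xm.divisors.filter (fun d => d * x r ∣ xm),
        (ArithmeticFunction.moebius d : ℤ) * (if (∀ i, ¬ d * x r ∣ y i) then 1 else 0)
        = ∑ J ∈ (univ : Finset (Fin l)).powerset,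
            (-1:ℤ)^J.card * ((if ∀ i ∈ J, d * x r ∣ y i then
              (ArithmeticFunction.moebius d : ℤ) else 0)) := by
      intro d _
      rw [hind (d * x r), Finset.mul_sum]
      apply Finset.sum_congr rfl
      intro J _
      by_cases hJ : ∀ i ∈ J, d * x r ∣ y i
      · rw [if_pos hJ, if_pos hJ]; ring
      · rw [if_neg hJ, if_neg hJ]; ring
    rw [Finset.sum_congr rfl h2, Finset.sum_comm]
    apply Finset.sum_congr rfl
    intro J _
    rw [← Finset.mul_sum, ← Finset.sum_filter, Finset.filter_filter, hinner J]
  -- assemble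
  have hmain : (∑ r ∈ Finset.univ.filter (fun r : Fin n => x r ∣ xm),
        cCoef S (x r) xm * ((Nat.lcm (x k) (x r) : ℕ) : ℤ) ^ e)
      = ∑ J ∈ (univ : Finset (Fin l)).powerset,
          (-1:ℤ)^J.card * ((Nat.lcm (x k) (g J) : ℕ) : ℤ) ^ e := by
    have step1 : ∀ r ∈ Finset.univ.filter (fun r : Fin n => x r ∣ xm),
        cCoef S (x r) xm * ((Nat.lcm (x k) (x r) : ℕ) : ℤ) ^ e
          = ∑ J ∈ (univ : Finset (Fin l)).powerset,
              (-1:ℤ)^J.card * (if x r = g J then 1 else 0)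
                * ((Nat.lcm (x k) (x r) : ℕ) : ℤ) ^ e := by
      intro r hr
      rw [hc r (mem_filter.mp hr).2, Finset.sum_mul]
    rw [Finset.sum_congr rfl step1, Finset.sum_comm]
    apply Finset.sum_congr rfl
    intro J _
    obtain ⟨r0, -, hr0⟩ := mem_image.mp (hgS J)
    rw [Finset.sum_eq_single r0]
    · rw [hr0, if_pos rfl, mul_one]
    · intro b _ hne
      have hb : x b ≠ g J := fun h => hne (hinj (h.trans hr0.symm))
      rw [if_neg hb, mul_zero, zero_mul]
    · intro habs
      exact absurd (mem_filter.mpr ⟨mem_univ r0, hr0 ▸ hgdvd J⟩) habs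
  rw [hmain]
  rw [← Finset.sum_filter_add_sum_filter_not ((univ : Finset (Fin l)).powerset)
        (fun J => J = ∅)]
  congr 1
  · have : ((univ : Finset (Fin l)).powerset.filter (fun J => J = ∅)) = {∅} := by
      ext J
      simp
    rw [this, Finset.sum_singleton]
    have hge : g ∅ = xm := by simp [hgdef]
    rw [hge]
    simp
  · apply Finset.sum_congr rfl
    intro J hJ
    have hJne : J ≠ ∅ := (mem_filter.mp hJ).2
    obtain ⟨i, hi⟩ := Finset.nonempty_iff_ne_empty.mpr hJne
    have hdvd : J.gcd y ∣ xm := dvd_trans (Finset.gcd_dvd hi) (hy i).2.1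
    have : g J = J.gcd y := Nat.gcd_eq_right hdvd
    rw [this]
end

section
/- Let S = {x_1,...,x_n} be a gcd-closed set, e a positive integer, and suppose x_m divides x_k (i.e. gcd(x_k,x_m) = x_m) with x_m having at least one greatest-type divisor in S. Then Σ_{x_r | x_m} c_{rm} · lcm(x_k, x_r)^e = 0, where c_{rm} = Σ_{d·x_r | x_m, d·x_r ∤ x_t for all x_t ∈ S with x_t < x_m} μ(d). -/
open Finset

/-!
Since every `r ∣ xm ∣ xk`, `lcm xk r = xk` and the claim reduces to `∑ r, c_{rm} = 0`.
Substituting `D = d * r`, that sum is `∑ h D` over the divisors `D` of `xm` dividing no smaller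
element of `S`, where `h = 1_S * μ`. In a gcd-closed set every divisor `D` of `t ∈ S` is of this
kind for exactly one `s ∈ S` with `s ∣ t`, the least element of `S` divisible by `D`; summing over
these `s` gives `∑_{D ∣ t} h D = 1_S t = 1`. Möbius inversion over the divisibility order of `S`
then shows the sum vanishes at every element except the least one, which `xm` is not because it
has a greatest-type divisor.
-/

open ArithmeticFunction
open scoped ArithmeticFunction.Moebius ArithmeticFunction.zeta

def finsetIndicator (S : Finset ℕ) : ArithmeticFunction ℤ :=
  ⟨fun n => if n ≠ 0 ∧ n ∈ S then 1 else 0, by simp⟩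

theorem sum_divisors_finsetIndicator_mul_moebius {S : Finset ℕ} {t : ℕ} (ht : t ∈ S)
    (ht0 : t ≠ 0) : ∑ D ∈ t.divisors, (finsetIndicator S * μ) D = 1 := by
  rw [← coe_mul_zeta_apply, mul_assoc, moebius_mul_coe_zeta, mul_one]
  simp [finsetIndicator, ht, ht0]

theorem finsetIndicator_mul_moebius_apply (S : Finset ℕ) (D : ℕ) :
    (finsetIndicator S * μ) D = ∑ r ∈ D.divisors.filter (· ∈ S), μ (D / r) := by
  rw [mul_apply, Nat.sum_divisorsAntidiagonal (fun a b => finsetIndicator S a * μ b), sum_filter]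
  refine sum_congr rfl fun r hr => ?_
  simp [finsetIndicator, Nat.ne_of_gt (Nat.pos_of_mem_divisors hr)]

def newDivisors (S : Finset ℕ) (s : ℕ) : Finset ℕ :=
  s.divisors.filter (fun D => ∀ u ∈ S, u < s → ¬ D ∣ u)

theorem cCoef_eq_sum_newDivisors (S : Finset ℕ) {r : ℕ} (hr : 0 < r) (xm : ℕ) :
    cCoef S r xm = ∑ D ∈ newDivisors S xm, if r ∣ D then μ (D / r) else 0 := by
  rw [← sum_filter, cCoef, newDivisors, filter_filter]
  refine sum_nbij' (· * r) (· / r) ?_ ?_ ?_ ?_ ?_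
  · intro d hd
    simp only [mem_filter, Nat.mem_divisors] at hd ⊢
    exact ⟨⟨hd.2.1, hd.1.2⟩, hd.2.2, dvd_mul_left r d⟩
  · intro D hD
    simp only [mem_filter, Nat.mem_divisors] at hD ⊢
    obtain ⟨⟨hDxm, hxm0⟩, hnew, hrD⟩ := hD
    rw [Nat.div_mul_cancel hrD]
    exact ⟨⟨(Nat.div_dvd_of_dvd hrD).trans hDxm, hxm0⟩, hDxm, hnew⟩
  · intro d _
    exact Nat.mul_div_cancel d hr
  · intro D hD
    exact Nat.div_mul_cancel (mem_filter.1 hD).2.2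
  · intro d _
    rw [Nat.mul_div_cancel d hr]

theorem sum_cCoef_eq_sum_newDivisors {S : Finset ℕ} (hpos : ∀ a ∈ S, 0 < a) (xm : ℕ) :
    ∑ r ∈ S.filter (· ∣ xm), cCoef S r xm =
      ∑ D ∈ newDivisors S xm, (finsetIndicator S * μ) D := by
  rw [sum_congr rfl fun r hr => cCoef_eq_sum_newDivisors S (hpos r (mem_filter.1 hr).1) xm,
    sum_comm]
  refine sum_congr rfl fun D hD => ?_
  obtain ⟨hDxm, hxm0⟩ := Nat.mem_divisors.1 (mem_filter.1 hD).1
  rw [finsetIndicator_mul_moebius_apply, ← sum_filter, filter_filter]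
  refine sum_congr (ext fun r => ?_) fun _ _ => rfl
  simp only [mem_filter, Nat.mem_divisors]
  exact ⟨fun ⟨hrS, _, hrD⟩ => ⟨⟨hrD, ne_zero_of_dvd_ne_zero hxm0 hDxm⟩, hrS⟩,
    fun ⟨⟨hrD, _⟩, hrS⟩ => ⟨hrS, hrD.trans hDxm, hrD⟩⟩

theorem pairwiseDisjoint_newDivisors (S : Finset ℕ) :
    (S : Set ℕ).PairwiseDisjoint (newDivisors S) := by
  intro s hs s' hs' hne
  refine disjoint_left.2 fun D hD hD' => ?_
  simp only [newDivisors, mem_filter, Nat.mem_divisors] at hD hD'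
  rcases lt_or_gt_of_ne hne with h | h
  · exact hD'.2 s hs h hD.1.1
  · exact hD.2 s' hs' h hD'.1.1

theorem biUnion_newDivisors {S : Finset ℕ} (hpos : ∀ a ∈ S, 0 < a)
    (hgcd : ∀ a ∈ S, ∀ b ∈ S, Nat.gcd a b ∈ S) {t : ℕ} (ht : t ∈ S) :
    (S.filter (· ∣ t)).biUnion (newDivisors S) = t.divisors := by
  ext D
  simp only [mem_biUnion, mem_filter, newDivisors, Nat.mem_divisors]
  constructor
  · rintro ⟨s, ⟨-, hst⟩, ⟨hDs, -⟩, -⟩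
    exact ⟨hDs.trans hst, (hpos t ht).ne'⟩
  · rintro ⟨hDt, -⟩
    have hne : (S.filter (D ∣ ·)).Nonempty := ⟨t, mem_filter.2 ⟨ht, hDt⟩⟩
    obtain ⟨hsS, hDs⟩ := mem_filter.1 ((S.filter (D ∣ ·)).min'_mem hne)
    set s := (S.filter (D ∣ ·)).min' hne
    have hmin : ∀ u ∈ S, D ∣ u → s ≤ u := fun u hu hDu => min'_le _ _ (mem_filter.2 ⟨hu, hDu⟩)
    have hgcd_eq : Nat.gcd s t = s :=
      le_antisymm (Nat.gcd_le_left t (hpos s hsS))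
        (hmin _ (hgcd s hsS t ht) (Nat.dvd_gcd hDs hDt))
    exact ⟨s, ⟨hsS, hgcd_eq ▸ Nat.gcd_dvd_right s t⟩, ⟨hDs, (hpos s hsS).ne'⟩,
      fun u hu hus hDu => (hmin u hu hDu).not_gt hus⟩

theorem sum_filter_dvd_sum_newDivisors {M : Type*} [AddCommMonoid M] {S : Finset ℕ}
    (hpos : ∀ a ∈ S, 0 < a) (hgcd : ∀ a ∈ S, ∀ b ∈ S, Nat.gcd a b ∈ S) {t : ℕ} (ht : t ∈ S)
    (f : ℕ → M) :
    ∑ s ∈ S.filter (· ∣ t), ∑ D ∈ newDivisors S s, f D = ∑ D ∈ t.divisors, f D := by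
  rw [← biUnion_newDivisors hpos hgcd ht,
    sum_biUnion ((pairwiseDisjoint_newDivisors S).subset (coe_subset.2 (filter_subset _ _)))]

theorem eqOn_of_sum_filter_dvd_eq {M : Type*} [AddCancelCommMonoid M] {S : Finset ℕ}
    (hpos : ∀ a ∈ S, 0 < a) {f g : ℕ → M}
    (h : ∀ t ∈ S, ∑ s ∈ S.filter (· ∣ t), f s = ∑ s ∈ S.filter (· ∣ t), g s) :
    Set.EqOn f g S := by
  intro t
  induction t using Nat.strong_induction_on with
  | _ t ih =>
    intro ht
    have hsum := h t ht
    have htmem : t ∈ S.filter (· ∣ t) := mem_filter.2 ⟨ht, dvd_rfl⟩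
    have hproper : ∑ s ∈ (S.filter (· ∣ t)).erase t, f s = ∑ s ∈ (S.filter (· ∣ t)).erase t, g s := by
      refine sum_congr rfl fun s hs => ?_
      obtain ⟨hst, hsS, hsdvd⟩ := by simpa only [mem_erase, mem_filter] using hs
      exact ih s (lt_of_le_of_ne (Nat.le_of_dvd (hpos t ht) hsdvd) hst) hsS
    rw [← add_sum_erase _ _ htmem, ← add_sum_erase _ _ htmem, hproper] at hsum
    exact add_right_cancel hsum

theorem exists_mem_forall_dvd {S : Finset ℕ} (hpos : ∀ a ∈ S, 0 < a)
    (hgcd : ∀ a ∈ S, ∀ b ∈ S, Nat.gcd a b ∈ S) (hne : S.Nonempty) :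
    ∃ s₀ ∈ S, ∀ t ∈ S, s₀ ∣ t := by
  refine ⟨S.min' hne, S.min'_mem hne, fun t ht => ?_⟩
  have hgcd_eq : Nat.gcd (S.min' hne) t = S.min' hne :=
    le_antisymm (Nat.gcd_le_left t (hpos _ (S.min'_mem hne)))
      (S.min'_le _ (hgcd _ (S.min'_mem hne) t ht))
  exact hgcd_eq ▸ Nat.gcd_dvd_right _ t

theorem sum_newDivisors_finsetIndicator_mul_moebius {S : Finset ℕ} (hpos : ∀ a ∈ S, 0 < a)
    (hgcd : ∀ a ∈ S, ∀ b ∈ S, Nat.gcd a b ∈ S) {s₀ : ℕ} (hs₀ : s₀ ∈ S)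
    (hs₀dvd : ∀ t ∈ S, s₀ ∣ t) {t : ℕ} (ht : t ∈ S) :
    ∑ D ∈ newDivisors S t, (finsetIndicator S * μ) D = if t = s₀ then 1 else 0 := by
  refine eqOn_of_sum_filter_dvd_eq hpos
    (f := fun t => ∑ D ∈ newDivisors S t, (finsetIndicator S * μ) D)
    (g := fun t => if t = s₀ then 1 else 0) (fun t ht => ?_) ht
  rw [sum_filter_dvd_sum_newDivisors hpos hgcd ht,
    sum_divisors_finsetIndicator_mul_moebius ht (hpos t ht).ne',
    sum_ite_eq' _ _ (fun _ => (1 : ℤ)), if_pos (mem_filter.2 ⟨hs₀, hs₀dvd t ht⟩)]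

theorem sum_cCoef_lcm_eq_zero_general (e : ℕ) (S : Finset ℕ)
    (hpos : ∀ a ∈ S, 0 < a) (hgcd : ∀ a ∈ S, ∀ b ∈ S, Nat.gcd a b ∈ S)
    (xk xm : ℕ) (hm : xm ∈ S)
    (hdvd : xm ∣ xk) (hG : (GS S xm).Nonempty) :
    (∑ r ∈ S.filter (fun r => r ∣ xm),
        cCoef S r xm * ((Nat.lcm xk r : ℕ) : ℤ) ^ e) = 0 := by
  have hlcm : ∀ r ∈ S.filter (· ∣ xm), Nat.lcm xk r = xk := fun r hr =>
    Nat.lcm_eq_left ((mem_filter.1 hr).2.trans hdvd)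
  obtain ⟨s₀, hs₀, hs₀dvd⟩ := exists_mem_forall_dvd hpos hgcd ⟨xm, hm⟩
  obtain ⟨s, hs⟩ := hG
  obtain ⟨hsS, -, hsxm, -⟩ := mem_filter.1 hs
  have hxm : xm ≠ s₀ := fun h => (Nat.le_of_dvd (hpos s hsS) (h ▸ hs₀dvd s hsS)).not_gt hsxm
  rw [sum_congr rfl fun r hr => by rw [hlcm r hr], ← sum_mul, sum_cCoef_eq_sum_newDivisors hpos,
    sum_newDivisors_finsetIndicator_mul_moebius hpos hgcd hs₀ hs₀dvd hm, if_neg hxm, zero_mul]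

theorem sum_cCoef_lcm_eq_zero (e : ℕ) (he : 0 < e) (S : Finset ℕ)
    (hpos : ∀ a ∈ S, 0 < a) (hgcd : ∀ a ∈ S, ∀ b ∈ S, Nat.gcd a b ∈ S)
    (xk xm : ℕ) (hk : xk ∈ S) (hm : xm ∈ S)
    (hdvd : xm ∣ xk) (hG : (GS S xm).Nonempty) :
    (∑ r ∈ S.filter (fun r => r ∣ xm),
        cCoef S r xm * ((Nat.lcm xk r : ℕ) : ℤ) ^ e) = 0 :=
  sum_cCoef_lcm_eq_zero_general e S hpos hgcd xk xm hm hdvd hG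
end
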